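/- Any uniform limit V = lim_{n→∞} (1/β_n) log ψ_{β_n A} (β_n → ∞) of normalized logarithm of eigenfunctions is a calibrated subaction for A: for every y ∈ M^ℕ, m(A) = max_{a ∈ M} [A(ay) + V(ay) − V(y)], where m(A) is the maximal ergodic average of A. -/

import Mathlib

open MeasureTheory Filter Topology

noncomputable section

/-- Concatenation `ax` of a symbol `a ∈ M` with a sequence `x ∈ M^ℕ`. -/
def pcons {M : Type*} (a : M) (x : ℕ → M) : ℕ → M
  | 0 => a
  | n + 1 => x n

/-- The left shift on `M^ℕ`. -/
def shiftMap {M : Type*} (x : ℕ → M) : ℕ → M := fun n => x (n + 1)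

/-- The metric `d(x,y) = ∑_{n ≥ 1} 2^{-n} d_M(x_n, y_n)` on `M^ℕ`
(coordinates indexed from 0, so coordinate `n` has weight `2^{-(n+1)}`). -/
def dB {M : Type*} [MetricSpace M] (x y : ℕ → M) : ℝ :=
  ∑' n : ℕ, (1 / 2 : ℝ) ^ (n + 1) * dist (x n) (y n)

/-- `f : M^ℕ → ℝ` is `α`-Hölder with constant `C` (w.r.t. the metric `dB`). -/
def HolderFWith {M : Type*} [MetricSpace M] (C α : ℝ) (f : (ℕ → M) → ℝ) : Prop :=
  Continuous f ∧ ∀ x y, |f x - f y| ≤ C * dB x y ^ α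

/-- `f : M^ℕ → ℝ` is `α`-Hölder continuous. -/
def HolderF {M : Type*} [MetricSpace M] (α : ℝ) (f : (ℕ → M) → ℝ) : Prop :=
  ∃ C, 0 ≤ C ∧ HolderFWith C α f

/-- The Ruelle (transfer) operator with a-priori measure `ν` and potential `A`:
`L_A(φ)(x) = ∫_M e^{A(ax)} φ(ax) dν(a)`. -/
def Ruelle {M : Type*} [MetricSpace M] [MeasurableSpace M] (ν : Measure M)
    (A : (ℕ → M) → ℝ) (φ : (ℕ → M) → ℝ) : (ℕ → M) → ℝ :=
  fun x => ∫ a, Real.exp (A (pcons a x)) * φ (pcons a x) ∂ν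

section Aux

variable {M : Type*} [MetricSpace M]

lemma pcons_shift (x : ℕ → M) : pcons (x 0) (shiftMap x) = x := by
  funext n; cases n <;> rfl

lemma continuous_shiftMap : Continuous (shiftMap : (ℕ → M) → ℕ → M) :=
  continuous_pi fun n => continuous_apply (n + 1)

lemma continuous_pcons (y : ℕ → M) : Continuous (fun a : M => pcons a y) := by
  apply continuous_pi
  intro n
  cases n with
  | zero => exact continuous_id
  | succ k => exact continuous_const

lemma shiftMap_iterate (x : ℕ → M) (j n : ℕ) : (shiftMap^[j]) x n = x (n + j) := by
  induction j generalizing x n with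
  | zero => rfl
  | succ j ih =>
      rw [Function.iterate_succ_apply, ih]
      rfl

lemma summable_dB_aux (D : ℝ) : Summable (fun n : ℕ => (1/2:ℝ)^(n+1) * D) := by
  simpa [pow_succ, mul_assoc] using summable_geometric_two.mul_right ((1/2 : ℝ) * D)

lemma summable_dB (x y : ℕ → M) (D : ℝ) (hD : ∀ p q : M, dist p q ≤ D) :
    Summable (fun n => (1/2:ℝ)^(n+1) * dist (x n) (y n)) := by
  refine Summable.of_nonneg_of_le (fun n => by positivity)
    (fun n => mul_le_mul_of_nonneg_left (hD _ _) (by positivity)) (summable_dB_aux D)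

lemma dB_nonneg (x y : ℕ → M) : 0 ≤ dB x y := tsum_nonneg fun n => by positivity

lemma tsum_half_pow : ∑' n : ℕ, (1/2:ℝ)^(n+1) = 1 := by
  have : ∑' n : ℕ, (1/2:ℝ)^(n+1) = (∑' n : ℕ, (1/2:ℝ)^n) * (1/2) := by
    simp [pow_succ, tsum_mul_right]
  rw [this, tsum_geometric_two]
  norm_num

lemma dB_le_of_agree (x y : ℕ → M) (D : ℝ) (hD0 : 0 ≤ D)
    (hD : ∀ p q : M, dist p q ≤ D) (K : ℕ) (hagree : ∀ i < K, x i = y i) :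
    dB x y ≤ D * (1/2)^K := by
  have hs := summable_dB x y D hD
  have hzero : ∑ i ∈ Finset.range K, (1/2:ℝ)^(i+1) * dist (x i) (y i) = 0 :=
    Finset.sum_eq_zero fun i hi => by
      rw [hagree i (Finset.mem_range.1 hi), dist_self, mul_zero]
  have h1 : dB x y = ∑' n : ℕ, (1/2:ℝ)^(n+K+1) * dist (x (n+K)) (y (n+K)) := by
    have h2 := Summable.sum_add_tsum_nat_add K hs
    rw [hzero, zero_add] at h2
    exact h2.symm
  rw [h1]
  have hsum2 : Summable (fun n : ℕ => (1/2:ℝ)^(n+K+1) * dist (x (n+K)) (y (n+K))) :=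
    (summable_nat_add_iff K).2 hs
  have hsum3 : Summable (fun n : ℕ => (1/2:ℝ)^(n+K+1) * D) :=
    (summable_nat_add_iff K).2 (summable_dB_aux D)
  calc ∑' n : ℕ, (1/2:ℝ)^(n+K+1) * dist (x (n+K)) (y (n+K))
      ≤ ∑' n : ℕ, (1/2:ℝ)^(n+K+1) * D :=
        Summable.tsum_le_tsum (fun n => mul_le_mul_of_nonneg_left (hD _ _) (by positivity)) hsum2 hsum3
    _ = D * (1/2)^K := by
        have hterm : ∀ n : ℕ, (1/2:ℝ)^(n+K+1) * D = (1/2:ℝ)^(n+1) * ((1/2)^K * D) := by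
          intro n; ring
        rw [tsum_congr hterm, tsum_mul_right, tsum_half_pow]
        ring

lemma continuous_integrable {X : Type*} [TopologicalSpace X] [CompactSpace X] [Nonempty X]
    [MeasurableSpace X] [OpensMeasurableSpace X] {f : X → ℝ} (hf : Continuous f)
    (μ : Measure X) [IsFiniteMeasure μ] : Integrable f μ := by
  obtain ⟨x₀, -, hx₀⟩ := isCompact_univ.exists_isMaxOn Set.univ_nonempty hf.norm.continuousOn
  exact ⟨hf.aestronglyMeasurable,
    HasFiniteIntegral.of_bounded (C := ‖f x₀‖) (Filter.Eventually.of_forall fun x => hx₀ (Set.mem_univ x))⟩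

lemma map_finset_sum_measure {X Y : Type*} [MeasurableSpace X] [MeasurableSpace Y] {f : X → Y}
    (hf : Measurable f) {ι : Type*} (s : Finset ι) (μ : ι → Measure X) :
    (∑ i ∈ s, μ i).map f = ∑ i ∈ s, (μ i).map f := by
  classical
  induction s using Finset.induction_on with
  | empty => simp
  | insert _ _ h ih => rw [Finset.sum_insert h, Finset.sum_insert h, Measure.map_add _ _ hf, ih]

end Aux

lemma laplace_tendsto {M : Type*} [MetricSpace M] [CompactSpace M] [Nonempty M]
    [MeasurableSpace M] [BorelSpace M] (ν : Measure M) [IsProbabilityMeasure ν]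
    (hsupp : ∀ U : Set M, IsOpen U → U.Nonempty → 0 < ν U)
    (g : ℕ → M → ℝ) (G : M → ℝ) (hGc : Continuous G)
    (hgc : ∀ n, Continuous (g n)) (hg : TendstoUniformly g G atTop)
    (β : ℕ → ℝ) (hβpos : ∀ n, 0 < β n) (hβ : Tendsto β atTop atTop)
    (Q : ℝ) (hub : ∀ a, G a ≤ Q) (hmem : ∃ a, G a = Q) :
    Tendsto (fun n => Real.log (∫ a, Real.exp (β n * g n a) ∂ν) / β n) atTop (𝓝 Q) := by
  refine Metric.tendsto_atTop.2 fun ε hε => ?_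
  have hε4pos : 0 < ε/4 := by positivity
  obtain ⟨a₀, ha₀⟩ := hmem
  set U : Set M := {a | Q - ε/4 < G a} with hU
  have hUopen : IsOpen U := isOpen_lt continuous_const hGc
  have hUne : U.Nonempty := ⟨a₀, by simp only [hU, Set.mem_setOf_eq, ha₀]; linarith⟩
  set cU := (ν U).toReal with hcU
  have hcUpos : 0 < cU := ENNReal.toReal_pos (hsupp U hUopen hUne).ne' (measure_ne_top ν U)
  have hunif := Metric.tendstoUniformly_iff.1 hg (ε/4) hε4pos
  have hβev : ∀ᶠ n in atTop, max 1 (|Real.log cU| / (ε/4)) ≤ β n := hβ.eventually_ge_atTop _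
  obtain ⟨N, hN⟩ := eventually_atTop.1 (hunif.and hβev)
  refine ⟨N, fun n hn => ?_⟩
  obtain ⟨hd, hβn⟩ := hN n hn
  have hβn1 : 1 ≤ β n := le_trans (le_max_left _ _) hβn
  have hβnpos := hβpos n
  set In := ∫ a, Real.exp (β n * g n a) ∂ν with hIn
  have hintg : Integrable (fun a => Real.exp (β n * g n a)) ν :=
    continuous_integrable ((continuous_const.mul (hgc n)).rexp) ν
  have hlow : cU * Real.exp (β n * (Q - 2*(ε/4))) ≤ In := by
    have hptw : ∀ a, U.indicator (fun _ => Real.exp (β n * (Q - 2*(ε/4)))) a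
        ≤ Real.exp (β n * g n a) := by
      intro a
      by_cases ha : a ∈ U
      · rw [Set.indicator_of_mem ha]
        apply Real.exp_le_exp.2
        refine mul_le_mul_of_nonneg_left ?_ hβnpos.le
        have h1 : Q - ε/4 < G a := ha
        have h2 := abs_lt.1 (by rw [← Real.dist_eq]; exact hd a)
        linarith [h2.1, h2.2]
      · rw [Set.indicator_of_notMem ha]; positivity
    have hintind : Integrable (U.indicator fun _ => Real.exp (β n * (Q - 2*(ε/4)))) ν :=
      (integrable_const _).indicator hUopen.measurableSet
    have h3 := integral_mono hintind hintg hptw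
    rwa [integral_indicator_const _ hUopen.measurableSet, smul_eq_mul] at h3
  have hInpos : 0 < In := lt_of_lt_of_le (by positivity) hlow
  have hupp : In ≤ Real.exp (β n * (Q + ε/4)) := by
    have hptw : ∀ a, Real.exp (β n * g n a) ≤ Real.exp (β n * (Q + ε/4)) := by
      intro a
      apply Real.exp_le_exp.2
      refine mul_le_mul_of_nonneg_left ?_ hβnpos.le
      have h2 := abs_lt.1 (by rw [← Real.dist_eq]; exact hd a)
      have := hub a
      linarith [h2.1, h2.2]
    calc In ≤ ∫ _a, Real.exp (β n * (Q + ε/4)) ∂ν := integral_mono hintg (integrable_const _) hptw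
      _ = Real.exp (β n * (Q + ε/4)) := by simp [measure_univ]
  have hlog1 : Real.log In ≤ β n * (Q + ε/4) := by
    calc Real.log In ≤ Real.log (Real.exp (β n * (Q + ε/4))) :=
          Real.log_le_log hInpos hupp
      _ = β n * (Q + ε/4) := Real.log_exp _
  have hlog2 : Real.log cU + β n * (Q - 2*(ε/4)) ≤ Real.log In := by
    calc Real.log cU + β n * (Q - 2*(ε/4))
        = Real.log (cU * Real.exp (β n * (Q - 2*(ε/4)))) := by
          rw [Real.log_mul hcUpos.ne' (Real.exp_ne_zero _), Real.log_exp]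
      _ ≤ Real.log In := Real.log_le_log (by positivity) hlow
  have hq1 : Real.log In / β n ≤ Q + ε/4 := by
    rw [div_le_iff₀ hβnpos]; nlinarith [hlog1]
  have hq2 : Q - 3*(ε/4) ≤ Real.log In / β n := by
    rw [le_div_iff₀ hβnpos]
    have hlogc : -((ε/4) * β n) ≤ Real.log cU := by
      have h2 : |Real.log cU| / (ε/4) ≤ β n := le_trans (le_max_right _ _) hβn
      have h1 : |Real.log cU| ≤ (ε/4) * β n := by
        calc |Real.log cU| = (|Real.log cU|/(ε/4)) * (ε/4) := by field_simp
          _ ≤ β n * (ε/4) := mul_le_mul_of_nonneg_right h2 hε4pos.le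
          _ = (ε/4) * β n := mul_comm _ _
      linarith [neg_abs_le (Real.log cU)]
    nlinarith [hlog2]
  rw [Real.dist_eq, abs_sub_lt_iff]
  constructor <;> linarith

/-- any uniform limit `V = lim (1/βₙ) log ψ_{βₙA}` is a calibrated
subaction for `A`: for every `y`, `m(A) = max_{a ∈ M} [A(ay) + V(ay) − V(y)]`. -/
theorem limit_is_calibrated_subaction {M : Type*} [MetricSpace M] [CompactSpace M]
    [Nonempty M] [MeasurableSpace M] [BorelSpace M]
    (ν : Measure M) [IsProbabilityMeasure ν]
    (hsupp : ∀ U : Set M, IsOpen U → U.Nonempty → 0 < ν U)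
    {α : ℝ} (hα : 0 < α)
    (A : (ℕ → M) → ℝ) (hA : HolderF α A)
    (β : ℕ → ℝ) (hβpos : ∀ n, 0 < β n) (hβ : Tendsto β atTop atTop)
    (ψ : ℕ → (ℕ → M) → ℝ) (lam : ℕ → ℝ) (hlam : ∀ n, 0 < lam n)
    (hψ : ∀ n, HolderF α (ψ n) ∧ (∀ x, 0 < ψ n x) ∧
      ∀ x, Ruelle ν (fun z => β n * A z) (ψ n) x = lam n * ψ n x)
    (hψnorm : ∀ n, (⨆ x : ℕ → M, ψ n x) = 1)
    (m : ℝ)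
    (hm : IsLUB {r : ℝ | ∃ μ' : Measure (ℕ → M), IsProbabilityMeasure μ' ∧
        Measure.map shiftMap μ' = μ' ∧ r = ∫ x, A x ∂μ'} m)
    (V : (ℕ → M) → ℝ)
    (hV : TendstoUniformly (fun n x => Real.log (ψ n x) / β n) V atTop) :
    ∀ y : ℕ → M,
      IsGreatest {r : ℝ | ∃ a : M, r = A (pcons a y) + V (pcons a y) - V y} m := by
  classical
  obtain ⟨C, hC0, hAc, hAH⟩ := hA
  have hψc : ∀ n, Continuous (ψ n) := fun n => ((hψ n).1).choose_spec.2.1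
  have hψpos : ∀ n x, 0 < ψ n x := fun n => (hψ n).2.1
  have hlogc : ∀ n, Continuous fun x => Real.log (ψ n x) / β n := fun n =>
    ((hψc n).log fun x => (hψpos n x).ne').div_const _
  have hVc : Continuous V := hV.continuous (Filter.Eventually.of_forall hlogc).frequently
  haveI : Nonempty (ℕ → M) := ⟨fun _ => Classical.arbitrary M⟩
  -- maximizers of a ↦ A(ay) + V(ay)
  choose amax hamax using fun y : ℕ → M =>
    ((hAc.comp (continuous_pcons y)).add (hVc.comp (continuous_pcons y))).exists_forall_ge
      (by simp [Filter.cocompact_eq_bot])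
  set Q : (ℕ → M) → ℝ := fun y => A (pcons (amax y) y) + V (pcons (amax y) y) with hQdef
  have hQub : ∀ (y : ℕ → M) (a : M), A (pcons a y) + V (pcons a y) ≤ Q y := fun y a => hamax y a
  -- Laplace: (1/βₙ) log λₙ → Q y − V y for every y
  have hlamlim : ∀ y : ℕ → M,
      Tendsto (fun n => Real.log (lam n) / β n) atTop (𝓝 (Q y - V y)) := by
    intro y
    have key : ∀ n, ∫ a, Real.exp (β n * (A (pcons a y) + Real.log (ψ n (pcons a y)) / β n)) ∂ν
        = lam n * ψ n y := by
      intro n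
      rw [← (hψ n).2.2 y]
      unfold Ruelle
      congr 1
      funext a
      rw [mul_add, mul_div_cancel₀ _ (hβpos n).ne', Real.exp_add, Real.exp_log (hψpos n _)]
    have h2 : TendstoUniformly (fun (_ : ℕ) (a : M) => A (pcons a y))
        (fun a => A (pcons a y)) atTop :=
      fun u hu => Filter.Eventually.of_forall fun _ _ => refl_mem_uniformity hu
    have h1 : TendstoUniformly (fun n (a : M) => Real.log (ψ n (pcons a y)) / β n)
        (fun a => V (pcons a y)) atTop := hV.comp fun a => pcons a y
    have hunif := h2.add h1
    have hgc : ∀ n, Continuous fun a : M => A (pcons a y) + Real.log (ψ n (pcons a y)) / β n :=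
      fun n => (hAc.comp (continuous_pcons y)).add ((hlogc n).comp (continuous_pcons y))
    have hGc : Continuous fun a : M => A (pcons a y) + V (pcons a y) :=
      (hAc.comp (continuous_pcons y)).add (hVc.comp (continuous_pcons y))
    have hIlim := laplace_tendsto ν hsupp _ _ hGc hgc hunif β hβpos hβ (Q y)
      (hQub y) ⟨amax y, rfl⟩
    have hIlim' : Tendsto (fun n => Real.log (lam n * ψ n y) / β n) atTop (𝓝 (Q y)) := by
      simpa only [key] using hIlim
    have hVy := hV.tendsto_at y
    have hsub := hIlim'.sub hVy
    refine hsub.congr fun n => ?_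
    rw [Real.log_mul (hlam n).ne' (hψpos n y).ne', add_div]
    ring
  set y₀ : ℕ → M := fun _ => Classical.arbitrary M with hy₀
  set L : ℝ := Q y₀ - V y₀ with hL
  have hLy : ∀ y, Q y = L + V y := fun y => by
    have := tendsto_nhds_unique (hlamlim y) (hlamlim y₀)
    rw [hL]; linarith
  -- m ≤ L
  have hmleL : m ≤ L := by
    apply hm.2
    rintro r ⟨μ', hprob, hinv, rfl⟩
    haveI := hprob
    have hpt : ∀ x : ℕ → M, A x ≤ L + V (shiftMap x) - V x := by
      intro x
      have h := hQub (shiftMap x) (x 0)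
      rw [pcons_shift] at h
      rw [hLy] at h
      linarith
    have hAint : Integrable A μ' := continuous_integrable hAc μ'
    have hVint : Integrable V μ' := continuous_integrable hVc μ'
    have hVσint : Integrable (fun x => V (shiftMap x)) μ' :=
      continuous_integrable (hVc.comp continuous_shiftMap) μ'
    have h2 : ∫ x, A x ∂μ' ≤ ∫ x, (L + V (shiftMap x) - V x) ∂μ' :=
      integral_mono hAint (((integrable_const L).add hVσint).sub hVint) hpt
    have h3a : ∫ x, (L + V (shiftMap x) - V x) ∂μ'
        = ∫ x, (L + V (shiftMap x)) ∂μ' - ∫ x, V x ∂μ' :=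
      integral_sub ((integrable_const L).add hVσint) hVint
    have h3b : ∫ x, (L + V (shiftMap x)) ∂μ'
        = ∫ _x, L ∂μ' + ∫ x, V (shiftMap x) ∂μ' :=
      integral_add (integrable_const L) hVσint
    have h3c : ∫ _x, L ∂μ' = L := by simp [measure_univ]
    have h3 : ∫ x, (L + V (shiftMap x) - V x) ∂μ'
        = L + ∫ x, V (shiftMap x) ∂μ' - ∫ x, V x ∂μ' := by rw [h3a, h3b, h3c]
    have h4 : ∫ x, V (shiftMap x) ∂μ' = ∫ x, V x ∂μ' := by
      conv_rhs => rw [← hinv]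
      rw [integral_map continuous_shiftMap.measurable.aemeasurable hVc.aestronglyMeasurable]
    linarith
  have hLlem : L ≤ m := by
    obtain ⟨D', hD'⟩ := Metric.isBounded_iff.1 (isCompact_univ (X := M)).isBounded
    set D : ℝ := max D' 0 with hDdef
    have hD : ∀ p q : M, dist p q ≤ D := fun p q =>
      le_trans (hD' (Set.mem_univ p) (Set.mem_univ q)) (le_max_left _ _)
    have hD0 : (0:ℝ) ≤ D := le_max_right _ _
    set ρ : ℝ := (1/2 : ℝ) ^ α with hρdef
    have hρ0 : 0 < ρ := Real.rpow_pos_of_pos (by norm_num) _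
    have hρ1 : ρ < 1 := Real.rpow_lt_one (by norm_num) (by norm_num) hα
    obtain ⟨zV, hzV⟩ := (hVc.abs).exists_forall_ge (by simp [Filter.cocompact_eq_bot])
    set BV : ℝ := |V zV| with hBVdef
    have hVb : ∀ z, |V z| ≤ BV := hzV
    have hDα0 : (0:ℝ) ≤ D ^ α := Real.rpow_nonneg hD0 _
    set C₂ : ℝ := C * D ^ α * (1 - ρ)⁻¹ with hC₂
    have hC₂0 : 0 ≤ C₂ := by
      refine mul_nonneg (mul_nonneg hC0 hDα0) ?_
      rw [inv_nonneg]; linarith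
    set c : ℝ := 2 * BV + C₂ with hcdef
    have hclaim : ∀ k : ℕ, 1 ≤ k → L - c / k ≤ m := by
      intro k hk
      have hkpos : 0 < k := hk
      have hkR : (0:ℝ) < k := Nat.cast_pos.2 hkpos
      set xs : ℕ → (ℕ → M) := fun j => Nat.rec y₀ (fun _ z => pcons (amax z) z) j with hxs
      have hxss : ∀ j, xs (j+1) = pcons (amax (xs j)) (xs j) := fun j => rfl
      have hxval : ∀ j, A (xs (j+1)) + V (xs (j+1)) = L + V (xs j) := by
        intro j
        have h1 : A (pcons (amax (xs j)) (xs j)) + V (pcons (amax (xs j)) (xs j))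
            = L + V (xs j) := hLy (xs j)
        rw [hxss]; exact h1
      have hxcoord : ∀ t j i, xs (j + t) (i + t) = xs j i := by
        intro t
        induction t with
        | zero => intro j i; rfl
        | succ t ih =>
            intro j i
            have h1 : xs (j + (t+1)) = pcons (amax (xs (j + t))) (xs (j + t)) := hxss (j+t)
            calc xs (j + (t+1)) (i + (t+1))
                = pcons (amax (xs (j+t))) (xs (j+t)) ((i+t)+1) := by rw [h1]; rfl
              _ = xs (j+t) (i+t) := rfl
              _ = xs j i := ih j i
      set p : ℕ → M := fun n => xs k (n % k) with hp
      have hper : shiftMap^[k] p = p := by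
        funext n
        rw [shiftMap_iterate]
        show xs k ((n + k) % k) = xs k (n % k)
        rw [Nat.add_mod_right]
      have hpshift : ∀ j, j < k → ∀ i, i < k - j → shiftMap^[j] p i = xs (k - j) i := by
        intro j hj i hi
        rw [shiftMap_iterate]
        show xs k ((i + j) % k) = xs (k - j) i
        have h1 : i + j < k := by omega
        rw [Nat.mod_eq_of_lt h1]
        have h2 := hxcoord j (k - j) i
        rw [show k - j + j = k from by omega] at h2
        exact h2
      have hρpow : ∀ K : ℕ, ((1/2:ℝ)^K) ^ α = ρ ^ K := by
        intro K
        rw [← Real.rpow_natCast (1/2:ℝ) K, ← Real.rpow_mul (by norm_num), mul_comm,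
          Real.rpow_mul (by norm_num), Real.rpow_natCast]
      have hAdiff : ∀ j, j < k →
          |A (shiftMap^[j] p) - A (xs (k - j))| ≤ C * D ^ α * ρ ^ (k - j) := by
        intro j hj
        have hdb : dB (shiftMap^[j] p) (xs (k - j)) ≤ D * (1/2)^(k-j) :=
          dB_le_of_agree _ _ D hD0 hD (k - j) (fun i hi => hpshift j hj i hi)
        calc |A (shiftMap^[j] p) - A (xs (k - j))|
            ≤ C * dB (shiftMap^[j] p) (xs (k - j)) ^ α := hAH _ _
          _ ≤ C * (D * (1/2)^(k-j)) ^ α :=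
              mul_le_mul_of_nonneg_left (Real.rpow_le_rpow (dB_nonneg _ _) hdb hα.le) hC0
          _ = C * D ^ α * ρ ^ (k - j) := by
              rw [Real.mul_rpow hD0 (by positivity), hρpow, mul_assoc]
      have hsum1 : |∑ j ∈ Finset.range k, A (shiftMap^[j] p)
          - ∑ j ∈ Finset.range k, A (xs (k - j))| ≤ C₂ := by
        rw [← Finset.sum_sub_distrib]
        refine (Finset.abs_sum_le_sum_abs _ _).trans ?_
        refine le_trans (Finset.sum_le_sum fun j hj => hAdiff j (Finset.mem_range.1 hj)) ?_
        rw [← Finset.mul_sum]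
        have h2 : ∑ j ∈ Finset.range k, ρ ^ (k - j) ≤ (1 - ρ)⁻¹ := by
          have hre : ∑ j ∈ Finset.range k, ρ ^ (k - j)
              = ∑ j ∈ Finset.range k, ρ ^ (j+1) := by
            rw [← Finset.sum_range_reflect]
            refine Finset.sum_congr rfl fun j hj => ?_
            have := Finset.mem_range.1 hj
            congr 1
            omega
          rw [hre]
          calc ∑ j ∈ Finset.range k, ρ ^ (j+1) ≤ ∑ j ∈ Finset.range k, ρ ^ j :=
              Finset.sum_le_sum fun j _ => pow_le_pow_of_le_one hρ0.le hρ1.le (Nat.le_succ j)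
            _ ≤ (1 - ρ)⁻¹ := by
              have h3 := Summable.sum_le_tsum (Finset.range k) (fun i _ => pow_nonneg hρ0.le i)
                (summable_geometric_of_lt_one hρ0.le hρ1)
              rwa [tsum_geometric_of_lt_one hρ0.le hρ1] at h3
        calc C * D ^ α * ∑ j ∈ Finset.range k, ρ ^ (k - j) ≤ C * D ^ α * (1 - ρ)⁻¹ :=
            mul_le_mul_of_nonneg_left h2 (mul_nonneg hC0 hDα0)
          _ = C₂ := rfl
      have htel : ∑ j ∈ Finset.range k, A (xs (k - j))
          = k * L + (V (xs 0) - V (xs k)) := by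
        have hre : ∑ j ∈ Finset.range k, A (xs (k - j))
            = ∑ j ∈ Finset.range k, A (xs (j+1)) := by
          have h1 := Finset.sum_range_reflect (fun j => A (xs (j + 1))) k
          rw [← h1]
          refine Finset.sum_congr rfl fun j hj => ?_
          have hjk := Finset.mem_range.1 hj
          have he : k - j = k - 1 - j + 1 := by omega
          rw [he]
        rw [hre]
        have heq : ∀ j ∈ Finset.range k, A (xs (j+1))
            = L + (V (xs j) - V (xs (j+1))) := fun j _ => by
          have := hxval j; linarith
        rw [Finset.sum_congr rfl heq, Finset.sum_add_distrib, Finset.sum_const,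
          Finset.card_range, Finset.sum_range_sub']
        simp [nsmul_eq_mul]
      have hσmeas : Measurable (shiftMap : (ℕ → M) → ℕ → M) := continuous_shiftMap.measurable
      set μk : Measure (ℕ → M) :=
        ((k : ENNReal))⁻¹ • ∑ j ∈ Finset.range k, Measure.dirac (shiftMap^[j] p) with hμk
      have hμkprob : IsProbabilityMeasure μk := by
        constructor
        rw [hμk, Measure.smul_apply, smul_eq_mul]
        have h1 : (∑ j ∈ Finset.range k, Measure.dirac (shiftMap^[j] p)) Set.univ = k := by
          rw [Measure.finset_sum_apply]
          simp [measure_univ]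
        rw [h1, ENNReal.inv_mul_cancel (by exact_mod_cast Nat.cast_ne_zero.2 (by omega))
          (ENNReal.natCast_ne_top k)]
      haveI := hμkprob
      have hμkinv : Measure.map shiftMap μk = μk := by
        rw [hμk, Measure.map_smul, map_finset_sum_measure hσmeas]
        congr 1
        have hmapd : ∀ j, (Measure.dirac (shiftMap^[j] p)).map shiftMap
            = Measure.dirac (shiftMap^[j+1] p) := fun j => by
          rw [Measure.map_dirac' hσmeas, Function.iterate_succ_apply']
        rw [Finset.sum_congr rfl fun j _ => hmapd j]
        obtain ⟨k', hk'⟩ : ∃ k', k = k' + 1 := ⟨k - 1, by omega⟩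
        subst hk'
        rw [Finset.sum_range_succ,
          Finset.sum_range_succ' (fun j => Measure.dirac (shiftMap^[j] p)) k']
        congr 1
        rw [hper]
        rfl
      have hμkint : ∫ x, A x ∂μk = (k:ℝ)⁻¹ * ∑ j ∈ Finset.range k, A (shiftMap^[j] p) := by
        rw [hμk, integral_smul_measure,
          integral_finset_sum_measure (fun j _ => continuous_integrable hAc _)]
        simp [integral_dirac, ENNReal.toReal_inv, smul_eq_mul]
      have hmemS : (∫ x, A x ∂μk) ∈ {r : ℝ | ∃ μ' : Measure (ℕ → M), IsProbabilityMeasure μ' ∧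
          Measure.map shiftMap μ' = μ' ∧ r = ∫ x, A x ∂μ'} := ⟨μk, hμkprob, hμkinv, rfl⟩
      have hle : ∫ x, A x ∂μk ≤ m := hm.1 hmemS
      have h5 : (k:ℝ) * L + (V (xs 0) - V (xs k)) - C₂
          ≤ ∑ j ∈ Finset.range k, A (shiftMap^[j] p) := by
        have h6 := (abs_sub_le_iff.1 hsum1).2
        rw [htel] at h6
        linarith
      have h7 : L - c / k ≤ ∫ x, A x ∂μk := by
        rw [hμkint]
        have hV0 := abs_le.1 (hVb (xs 0))
        have hVk := abs_le.1 (hVb (xs k))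
        have h8 : (k:ℝ) * L - c ≤ ∑ j ∈ Finset.range k, A (shiftMap^[j] p) := by
          rw [hcdef]; linarith [h5, hV0.1, hVk.2]
        have h9 : (k:ℝ)⁻¹ * ((k:ℝ) * L - c)
            ≤ (k:ℝ)⁻¹ * ∑ j ∈ Finset.range k, A (shiftMap^[j] p) :=
          mul_le_mul_of_nonneg_left h8 (inv_nonneg.2 hkR.le)
        have hkne : (k:ℝ) ≠ 0 := hkR.ne'
        have h10 : (k:ℝ)⁻¹ * ((k:ℝ) * L - c) = L - c / k := by
          field_simp
        linarith
      linarith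
    have hlim : Tendsto (fun k : ℕ => L - c / k) atTop (𝓝 L) := by
      have h1 := tendsto_const_div_atTop_nhds_zero_nat c
      simpa using tendsto_const_nhds.sub h1
    exact le_of_tendsto hlim (eventually_atTop.2 ⟨1, fun k hk => hclaim k hk⟩)
  have hmL : m = L := le_antisymm hmleL hLlem
  intro y
  constructor
  · refine ⟨amax y, ?_⟩
    have h : A (pcons (amax y) y) + V (pcons (amax y) y) = L + V y := hLy y
    rw [hmL]
    linarith
  · rintro r ⟨a, rfl⟩
    have h1 : A (pcons a y) + V (pcons a y)
        ≤ A (pcons (amax y) y) + V (pcons (amax y) y) := hQub y a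
    have h2 : A (pcons (amax y) y) + V (pcons (amax y) y) = L + V y := hLy y
    rw [hmL]
    linarith
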